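/- arXiv:1702.04004 — 2 statements merged into one kernel-verified Lean document; each statement's English description precedes it below -/
import Mathlib

section
/- The translations exp(M) act transitively on the hyperboloid from the origin: for every point (x, y, z, w) ∈ ℝ⁴ with x² + y² + z² = w² − 1 and w > 0, there exist real numbers dx, dy, dz such that exp(M) applied to e₄ = (0, 0, 0, 1) equals (x, y, z, w), where M is the matrix determined by dx, dy, dz. -/
open Matrix

noncomputable def lorentzBoostGen (dx dy dz : ℝ) : Matrix (Fin 4) (Fin 4) ℝ :=
  !![0, 0, 0, dx;
     0, 0, 0, dy;
     0, 0, 0, dz;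
     dx, dy, dz, 0]

/-! The generator with unit direction `u` swaps `e₄` and `(u, 0)`, so in the exponential series
of `r` times it, applied to `e₄`, the even terms give `cosh r • e₄` and the odd ones
`sinh r • (u, 0)`. Every point of the hyperboloid has the form `(sinh r • u, cosh r)` with `u` a
unit vector (hyperbolic polar coordinates), so the translation by `r u` reaches it. -/

open NormedSpace Real
open scoped Nat

namespace Matrix

variable {n : Type*} [Fintype n] [DecidableEq n]

theorem hasSum_exp_mulVec (A : Matrix n n ℝ) (v : n → ℝ) :
    HasSum (fun k => (k !⁻¹ : ℝ) • (A ^ k *ᵥ v)) (exp A *ᵥ v) := by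
  -- `exp` does not depend on the norm; one is needed only to invoke the series expansion.
  let _ : NormedRing (Matrix n n ℝ) := Matrix.linftyOpNormedRing
  let _ : NormedAlgebra ℝ (Matrix n n ℝ) := Matrix.linftyOpNormedAlgebra
  have h := (exp_series_hasSum_exp' (𝕂 := ℝ) A).map (mulVec.addMonoidHomLeft v)
    (continuous_id.matrix_mulVec continuous_const)
  simp only [mulVec.addMonoidHomLeft, AddMonoidHom.coe_mk, ZeroHom.coe_mk, Function.comp_def,
    smul_mulVec] at h
  exact h

theorem exp_smul_mulVec_of_mulVec_swap {B : Matrix n n ℝ} {a u : n → ℝ}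
    (ha : B *ᵥ a = u) (hu : B *ᵥ u = a) (r : ℝ) :
    exp (r • B) *ᵥ a = cosh r • a + sinh r • u := by
  have h_even (k : ℕ) : B ^ (2 * k) *ᵥ a = a := by
    induction k with
    | zero => simp
    | succ k ih => rw [mul_add, mul_one, pow_add, ← mulVec_mulVec, sq, ← mulVec_mulVec, ha, hu, ih]
  have h_odd (k : ℕ) : B ^ (2 * k + 1) *ᵥ a = u := by
    rw [pow_succ', ← mulVec_mulVec, h_even, ha]
  refine (hasSum_exp_mulVec (r • B) a).unique (HasSum.even_add_odd ?_ ?_)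
  · convert (hasSum_cosh r).smul_const a using 2 with k
    rw [smul_pow, smul_mulVec, h_even, smul_smul, div_eq_inv_mul]
  · convert (hasSum_sinh r).smul_const u using 2 with k
    rw [smul_pow, smul_mulVec, h_odd, smul_smul, div_eq_inv_mul]

end Matrix

theorem lorentzBoostGen_smul (r dx dy dz : ℝ) :
    lorentzBoostGen (r * dx) (r * dy) (r * dz) = r • lorentzBoostGen dx dy dz := by
  ext i j; fin_cases i <;> fin_cases j <;> simp [lorentzBoostGen]

theorem lorentzBoostGen_mulVec_e4 (dx dy dz : ℝ) :
    lorentzBoostGen dx dy dz *ᵥ ![0, 0, 0, 1] = ![dx, dy, dz, 0] := by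
  ext i; fin_cases i <;> simp [lorentzBoostGen]

theorem lorentzBoostGen_mulVec_self (dx dy dz : ℝ) :
    lorentzBoostGen dx dy dz *ᵥ ![dx, dy, dz, 0] = ![0, 0, 0, dx ^ 2 + dy ^ 2 + dz ^ 2] := by
  ext i; fin_cases i <;> simp [lorentzBoostGen, sq, add_assoc]

theorem exists_unit_sinh_cosh_of_mem_hyperboloid {x y z w : ℝ}
    (h : x ^ 2 + y ^ 2 + z ^ 2 = w ^ 2 - 1) (hw : 0 < w) :
    ∃ r ux uy uz : ℝ, ux ^ 2 + uy ^ 2 + uz ^ 2 = 1 ∧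
      x = sinh r * ux ∧ y = sinh r * uy ∧ z = sinh r * uz ∧ w = cosh r := by
  set s := √(x ^ 2 + y ^ 2 + z ^ 2)
  have hs : s ^ 2 = x ^ 2 + y ^ 2 + z ^ 2 := sq_sqrt (by positivity)
  have hcosh : cosh (arsinh s) = w := by
    rw [cosh_arsinh, hs, h, add_sub_cancel, sqrt_sq hw.le]
  rcases eq_or_ne s 0 with hs0 | hs0
  · have hx : x = 0 := by nlinarith
    have hy : y = 0 := by nlinarith
    have hz : z = 0 := by nlinarith
    refine ⟨0, 1, 0, 0, by norm_num, by simp [hx], by simp [hy], by simp [hz], ?_⟩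
    rw [← hcosh, hs0, arsinh_zero]
  · refine ⟨arsinh s, x / s, y / s, z / s, ?_, ?_, ?_, ?_, hcosh.symm⟩
    · field_simp; linarith
    all_goals rw [sinh_arsinh]; field_simp

theorem stmt_8 (x y z w : ℝ) (h : x ^ 2 + y ^ 2 + z ^ 2 = w ^ 2 - 1) (hw : 0 < w) :
    ∃ dx dy dz : ℝ,
      NormedSpace.exp (lorentzBoostGen dx dy dz) *ᵥ ![0, 0, 0, 1] = ![x, y, z, w] := by
  obtain ⟨r, ux, uy, uz, hu, rfl, rfl, rfl, rfl⟩ := exists_unit_sinh_cosh_of_mem_hyperboloid h hw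
  refine ⟨r * ux, r * uy, r * uz, ?_⟩
  have hswap : lorentzBoostGen ux uy uz *ᵥ ![ux, uy, uz, 0] = ![0, 0, 0, 1] := by
    rw [lorentzBoostGen_mulVec_self, hu]
  rw [lorentzBoostGen_smul,
    Matrix.exp_smul_mulVec_of_mulVec_swap (lorentzBoostGen_mulVec_e4 ux uy uz) hswap]
  ext i; fin_cases i <;> simp [mul_comm]
end

section
/- The Minkowski pairing of the origin with its translate records the translation distance: if r ≠ 0, then for J = diag(1,1,1,−1) and e₄ = (0,0,0,1), one has e₄ᵀ · J · (exp(M) · e₄) = −cosh(r). -/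
/-!
The generator satisfies `M ^ 3 = r ^ 2 • M`, so the `(4, 4)` entry of `M ^ n` is `r ^ n` for even
`n` and `0` for odd `n`. Hence the `(4, 4)` entry of `exp M` is the cosh series at `r`, and pairing
with `J` only contributes the sign of that entry.
-/

open Matrix

theorem ContinuousLinearMap.map_exp_eq_cosh {𝔸 : Type*} [NormedRing 𝔸] [NormedAlgebra ℝ 𝔸]
    [CompleteSpace 𝔸] (φ : 𝔸 →L[ℝ] ℝ) {a : 𝔸} {r : ℝ}
    (h_even : ∀ k, φ (a ^ (2 * k)) = r ^ (2 * k)) (h_odd : ∀ k, φ (a ^ (2 * k + 1)) = 0) :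
    φ (NormedSpace.exp a) = Real.cosh r := by
  have h_exp := φ.hasSum (NormedSpace.exp_series_hasSum_exp' (𝕂 := ℝ) a)
  have h_cosh : HasSum (fun n => φ ((n.factorial : ℝ)⁻¹ • a ^ n)) (Real.cosh r + 0) := by
    refine HasSum.even_add_odd ?_ ?_
    · simpa [h_even, div_eq_inv_mul] using Real.hasSum_cosh r
    · simp [h_odd]
  rw [add_zero] at h_cosh
  exact h_exp.unique h_cosh

theorem Matrix.exp_apply_eq_cosh {n : Type*} [Fintype n] [DecidableEq n] (A : Matrix n n ℝ)
    (i j : n) {r : ℝ} (h_even : ∀ k, (A ^ (2 * k)) i j = r ^ (2 * k))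
    (h_odd : ∀ k, (A ^ (2 * k + 1)) i j = 0) :
    NormedSpace.exp A i j = Real.cosh r := by
  let _ : NormedRing (Matrix n n ℝ) := Matrix.linftyOpNormedRing
  let _ : NormedAlgebra ℝ (Matrix n n ℝ) := Matrix.linftyOpNormedAlgebra
  exact (entryLinearMap ℝ ℝ i j).toContinuousLinearMap.map_exp_eq_cosh h_even h_odd

theorem pow_two_mul_add_one_eq_smul {R A : Type*} [CommSemiring R] [Semiring A] [Algebra R A]
    {a : A} {s : R} (h : a ^ 3 = s • a) (k : ℕ) : a ^ (2 * k + 1) = s ^ k • a := by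
  induction k with
  | zero => simp
  | succ k ih =>
    rw [show 2 * (k + 1) + 1 = 2 * k + 1 + 2 by ring, pow_add, ih, smul_mul_assoc, ← pow_succ',
      h, smul_smul, pow_succ]

theorem lorentzBoostGen_pow_three (dx dy dz : ℝ) :
    lorentzBoostGen dx dy dz ^ 3 = (dx ^ 2 + dy ^ 2 + dz ^ 2) • lorentzBoostGen dx dy dz := by
  rw [pow_succ, pow_two]
  ext i j
  fin_cases i <;> fin_cases j <;>
    simp [lorentzBoostGen, Matrix.mul_apply, Fin.sum_univ_four, -mul_eq_mul_left_iff,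
      -mul_eq_mul_right_iff] <;> ring

theorem lorentzBoostGen_pow_odd_apply_three_three (dx dy dz : ℝ) (k : ℕ) :
    (lorentzBoostGen dx dy dz ^ (2 * k + 1)) 3 3 = 0 := by
  rw [pow_two_mul_add_one_eq_smul (lorentzBoostGen_pow_three dx dy dz)]
  simp [lorentzBoostGen]

theorem lorentzBoostGen_pow_even_apply_three_three (dx dy dz : ℝ) (k : ℕ) :
    (lorentzBoostGen dx dy dz ^ (2 * k)) 3 3 = (dx ^ 2 + dy ^ 2 + dz ^ 2) ^ k := by
  cases k with
  | zero => simp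
  | succ k =>
    rw [show 2 * (k + 1) = 2 * k + 1 + 1 by ring, pow_succ,
      pow_two_mul_add_one_eq_smul (lorentzBoostGen_pow_three dx dy dz), smul_mul_assoc]
    simp [lorentzBoostGen]
    ring

theorem stmt_10_general (dx dy dz : ℝ) :
    ![0, 0, 0, 1] ⬝ᵥ
        (Matrix.diagonal ![1, 1, 1, -1] *ᵥ
          (NormedSpace.exp (lorentzBoostGen dx dy dz) *ᵥ ![0, 0, 0, 1])) =
      -Real.cosh (Real.sqrt (dx ^ 2 + dy ^ 2 + dz ^ 2)) := by
  have h_entry : NormedSpace.exp (lorentzBoostGen dx dy dz) 3 3 =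
      Real.cosh (Real.sqrt (dx ^ 2 + dy ^ 2 + dz ^ 2)) := by
    refine Matrix.exp_apply_eq_cosh _ 3 3 (fun k => ?_)
      (lorentzBoostGen_pow_odd_apply_three_three dx dy dz)
    rw [lorentzBoostGen_pow_even_apply_three_three, pow_mul, Real.sq_sqrt (by positivity)]
  simp [dotProduct, Fin.sum_univ_four, mulVec, h_entry]

theorem stmt_10 (dx dy dz : ℝ) (hr : Real.sqrt (dx ^ 2 + dy ^ 2 + dz ^ 2) ≠ 0) :
    ![0, 0, 0, 1] ⬝ᵥ
        (Matrix.diagonal ![1, 1, 1, -1] *ᵥ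
          (NormedSpace.exp (lorentzBoostGen dx dy dz) *ᵥ ![0, 0, 0, 1])) =
      -Real.cosh (Real.sqrt (dx ^ 2 + dy ^ 2 + dz ^ 2)) :=
  stmt_10_general dx dy dz
end
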